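/- arXiv:2012.05040 — 5 statements merged into one kernel-verified Lean document; each statement's English description precedes it below -/
import Mathlib

section
/- For every natural number n, the integral over [-1,1] of (P_{2n+1}(x)/x)^2 dx equals 2, where P_k denotes the k-th Legendre polynomial. (Note that P_{2n+1}(0) = 0, so P_{2n+1}(x)/x is a polynomial.) -/
/-!
Dividing the three-term recurrence by `x` shows that `Q_n = P_{2n+1}/x` satisfies `Q_0 = 1` and
`(2n+3) Q_{n+1} = (4n+5) P_{2n+2} - (2n+2) Q_n`. Hence `Q_n` lies in the span of `P_0, …, P_{2n}`
and is orthogonal to `P_{2n+2}`, so with `‖P_m‖² = 2/(2m+1)` Pythagoras gives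
`(2n+3)² ‖Q_{n+1}‖² = 2 (4n+5) + (2n+2)² ‖Q_n‖²`; as `(4n+5) + (2n+2)² = (2n+3)²`, the value
`‖Q_n‖² = 2` propagates from `Q_0 = 1`.

Orthogonality of the `P_m` comes from the Legendre equation `((x²-1) P_m')' = m(m+1) P_m`, and
`‖P_m‖²` from evaluating `∫ x P_{m+1} P_m` by the recurrence applied to either factor.
-/

open MeasureTheory Real

/-- The Legendre polynomials, defined by the three-term recurrence
`(n+1) P_{n+1}(x) = (2n+1) x P_n(x) - n P_{n-1}(x)` with `P_0 = 1`, `P_1 = x`. -/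
noncomputable def legendreP : ℕ → ℝ → ℝ
  | 0, _ => 1
  | 1, x => x
  | n + 2, x =>
      ((2 * (n : ℝ) + 3) * x * legendreP (n + 1) x - ((n : ℝ) + 1) * legendreP n x) / ((n : ℝ) + 2)

section LinearCombination

variable {a b : ℝ} {f g h : ℝ → ℝ}

theorem integral_linear_comb_mul (hf : Continuous f) (hg : Continuous g) (hh : Continuous h)
    (c d : ℝ) :
    ∫ x in a..b, (c * f x + d * g x) * h x =
      (c * ∫ x in a..b, f x * h x) + d * ∫ x in a..b, g x * h x := by
  simp_rw [add_mul, mul_assoc]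
  have hint : ∀ {u : ℝ → ℝ}, Continuous u → ∀ e : ℝ,
      IntervalIntegrable (fun x => e * (u x * h x)) volume a b :=
    fun hu e => ((hu.mul hh).const_mul e).intervalIntegrable _ _
  rw [intervalIntegral.integral_add (hint hf c) (hint hg d)]
  simp only [intervalIntegral.integral_const_mul]

theorem integral_linear_comb_sq_of_orthogonal (hf : Continuous f) (hg : Continuous g)
    (hfg : ∫ x in a..b, f x * g x = 0) (c d : ℝ) :
    ∫ x in a..b, (c * f x + d * g x) ^ 2 =
      (c ^ 2 * ∫ x in a..b, f x ^ 2) + d ^ 2 * ∫ x in a..b, g x ^ 2 := by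
  have hexpand : ∀ x, (c * f x + d * g x) ^ 2 =
      (c ^ 2 * f x ^ 2 + (2 * c * d) * (f x * g x)) + d ^ 2 * g x ^ 2 := fun x => by ring
  simp_rw [hexpand]
  have hint : ∀ u : ℝ → ℝ, Continuous u → ∀ e : ℝ,
      IntervalIntegrable (fun x => e * u x) volume a b :=
    fun _ hu e => (hu.const_mul e).intervalIntegrable _ _
  have hf2 := hint (fun x => f x ^ 2) (by fun_prop)
  have hfg' := hint (fun x => f x * g x) (by fun_prop)
  rw [intervalIntegral.integral_add ((hf2 _).add (hfg' _))
      (hint (fun x => g x ^ 2) (by fun_prop) _),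
    intervalIntegral.integral_add (hf2 _) (hfg' _)]
  simp only [intervalIntegral.integral_const_mul, hfg]
  ring

end LinearCombination

theorem legendreP_add_two (n : ℕ) (x : ℝ) :
    legendreP (n + 2) x =
      ((2 * (n : ℝ) + 3) * x * legendreP (n + 1) x - ((n : ℝ) + 1) * legendreP n x) /
        ((n : ℝ) + 2) :=
  rfl

-- For `k = 0` the truncated `k - 1` is harmless: its coefficient vanishes.
theorem mul_legendreP (k : ℕ) (x : ℝ) :
    x * legendreP k x = ((k : ℝ) + 1) / (2 * k + 1) * legendreP (k + 1) x +
      (k : ℝ) / (2 * k + 1) * legendreP (k - 1) x := by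
  cases k with
  | zero => simp [legendreP]
  | succ k =>
    rw [legendreP_add_two, Nat.add_sub_cancel]
    push_cast
    field_simp
    ring

noncomputable def legendrePDeriv : ℕ → ℝ → ℝ
  | 0, _ => 0
  | 1, _ => 1
  | n + 2, x =>
      ((2 * (n : ℝ) + 3) * (legendreP (n + 1) x + x * legendrePDeriv (n + 1) x) -
        ((n : ℝ) + 1) * legendrePDeriv n x) / ((n : ℝ) + 2)

theorem hasDerivAt_legendreP (n : ℕ) (x : ℝ) :
    HasDerivAt (legendreP n) (legendrePDeriv n x) x := by
  induction n using Nat.twoStepInduction generalizing x with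
  | zero => exact hasDerivAt_const x 1
  | one => exact hasDerivAt_id x
  | more n ih₀ ih₁ =>
    rw [show legendreP (n + 2) = _ from funext (legendreP_add_two n)]
    have hprod := ((hasDerivAt_id x).const_mul (2 * (n : ℝ) + 3)).mul (ih₁ x)
    refine ((hprod.sub ((ih₀ x).const_mul ((n : ℝ) + 1))).div_const ((n : ℝ) + 2)).congr_deriv ?_
    simp only [legendrePDeriv, id]
    ring

theorem continuous_legendreP (n : ℕ) : Continuous (legendreP n) :=
  continuous_iff_continuousAt.2 fun x => (hasDerivAt_legendreP n x).continuousAt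

theorem legendrePDeriv_recurrences (n : ℕ) (x : ℝ) :
    legendrePDeriv (n + 1) x = x * legendrePDeriv n x + ((n : ℝ) + 1) * legendreP n x ∧
      x * legendrePDeriv (n + 1) x - legendrePDeriv n x = ((n : ℝ) + 1) * legendreP (n + 1) x := by
  induction n with
  | zero => norm_num [legendrePDeriv, legendreP]
  | succ n ih =>
    obtain ⟨hderiv, hmul⟩ := ih
    simp only [legendrePDeriv, legendreP_add_two]
    push_cast
    constructor
    · field_simp
      linear_combination ((n : ℝ) + 1) * hmul
    · field_simp
      linear_combination (-((n : ℝ) + 2)) * hderiv + ((2 * (n : ℝ) + 3) * x) * hmul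

theorem sq_sub_one_mul_legendrePDeriv_succ (n : ℕ) (x : ℝ) :
    (x ^ 2 - 1) * legendrePDeriv (n + 1) x =
      ((n : ℝ) + 1) * (x * legendreP (n + 1) x - legendreP n x) := by
  obtain ⟨hderiv, hmul⟩ := legendrePDeriv_recurrences n x
  linear_combination (-1 : ℝ) * hderiv + x * hmul

theorem hasDerivAt_sq_sub_one_mul_legendrePDeriv (n : ℕ) (x : ℝ) :
    HasDerivAt (fun y => (y ^ 2 - 1) * legendrePDeriv n y)
      ((n : ℝ) * ((n : ℝ) + 1) * legendreP n x) x := by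
  cases n with
  | zero => simpa [legendrePDeriv] using hasDerivAt_const x (0 : ℝ)
  | succ n =>
    simp_rw [sq_sub_one_mul_legendrePDeriv_succ]
    have hprod := (hasDerivAt_id x).mul (hasDerivAt_legendreP (n + 1) x)
    refine ((hprod.sub (hasDerivAt_legendreP n x)).const_mul ((n : ℝ) + 1)).congr_deriv ?_
    simp only [id, one_mul]
    push_cast
    linear_combination ((n : ℝ) + 1) * (legendrePDeriv_recurrences n x).2

theorem integral_legendreP_mul_legendreP_of_ne {m k : ℕ} (h : m ≠ k) :
    ∫ x in (-1 : ℝ)..1, legendreP m x * legendreP k x = 0 := by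
  set c : ℝ := (m : ℝ) * ((m : ℝ) + 1) - (k : ℝ) * ((k : ℝ) + 1)
  have hc : c ≠ 0 := by
    have hfactor : c = ((m : ℝ) - k) * ((m : ℝ) + k + 1) := by ring
    rw [hfactor]
    exact mul_ne_zero (sub_ne_zero.2 (Nat.cast_injective.ne h)) (by positivity)
  -- Green's identity for the Legendre operator: the boundary terms carry the factor `x² - 1`.
  have hderiv : ∀ x ∈ Set.uIcc (-1 : ℝ) 1,
      HasDerivAt (fun x => (x ^ 2 - 1) * legendrePDeriv m x * legendreP k x -
        legendreP m x * ((x ^ 2 - 1) * legendrePDeriv k x))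
        (c * (legendreP m x * legendreP k x)) x := fun x _ => by
    have hleft := (hasDerivAt_sq_sub_one_mul_legendrePDeriv m x).mul (hasDerivAt_legendreP k x)
    have hright := (hasDerivAt_legendreP m x).mul (hasDerivAt_sq_sub_one_mul_legendrePDeriv k x)
    refine (hleft.sub hright).congr_deriv ?_
    ring
  have hint := intervalIntegral.integral_eq_sub_of_hasDerivAt hderiv <|
    ((continuous_legendreP m).mul (continuous_legendreP k)).const_mul c |>.intervalIntegrable _ _
  norm_num [intervalIntegral.integral_const_mul] at hint
  exact hint.resolve_left hc

theorem integral_mul_legendreP_mul {a b : ℝ} {h : ℝ → ℝ} (hh : Continuous h) (k : ℕ) :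
    ∫ x in a..b, x * legendreP k x * h x =
      ((k : ℝ) + 1) / (2 * k + 1) * (∫ x in a..b, legendreP (k + 1) x * h x) +
        (k : ℝ) / (2 * k + 1) * ∫ x in a..b, legendreP (k - 1) x * h x := by
  simp_rw [mul_legendreP]
  exact integral_linear_comb_mul (continuous_legendreP _) (continuous_legendreP _) hh _ _

theorem integral_legendreP_sq_succ (k : ℕ) :
    ∫ x in (-1 : ℝ)..1, legendreP (k + 1) x ^ 2 =
      (2 * k + 1) / (2 * k + 3) * ∫ x in (-1 : ℝ)..1, legendreP k x ^ 2 := by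
  have hupper := integral_mul_legendreP_mul (a := -1) (b := 1) (continuous_legendreP k) (k + 1)
  have hlower := integral_mul_legendreP_mul (a := -1) (b := 1) (continuous_legendreP (k + 1)) k
  have hswap : ∫ x in (-1 : ℝ)..1, x * legendreP (k + 1) x * legendreP k x =
      ∫ x in (-1 : ℝ)..1, x * legendreP k x * legendreP (k + 1) x :=
    intervalIntegral.integral_congr fun x _ => by ring
  rw [integral_legendreP_mul_legendreP_of_ne (by omega : k + 1 + 1 ≠ k), Nat.add_sub_cancel,
    hswap] at hupper
  rw [integral_legendreP_mul_legendreP_of_ne (by omega : k - 1 ≠ k + 1)] at hlower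
  rw [hlower] at hupper
  simp only [← sq, mul_zero, add_zero, zero_add] at hupper
  push_cast at hupper
  field_simp at hupper ⊢
  linear_combination hupper

theorem integral_legendreP_sq (m : ℕ) :
    ∫ x in (-1 : ℝ)..1, legendreP m x ^ 2 = 2 / (2 * m + 1) := by
  induction m with
  | zero => norm_num [legendreP]
  | succ m ih =>
    rw [integral_legendreP_sq_succ, ih]
    push_cast
    field_simp
    ring

/-- `P_{2n+1}(x) / x` as a polynomial function, i.e. also at `x = 0`, where Lean's `/` returns
`0`. The recurrence is the three-term recurrence for `P_{2n+3}` divided by `x`. -/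
noncomputable def legendrePDivX : ℕ → ℝ → ℝ
  | 0, _ => 1
  | n + 1, x =>
      (4 * (n : ℝ) + 5) / (2 * n + 3) * legendreP (2 * n + 2) x +
        (-(2 * (n : ℝ) + 2) / (2 * n + 3)) * legendrePDivX n x

theorem legendrePDivX_eq (n : ℕ) {x : ℝ} (hx : x ≠ 0) :
    legendrePDivX n x = legendreP (2 * n + 1) x / x := by
  induction n with
  | zero => simp [legendrePDivX, legendreP, hx]
  | succ n ih =>
    rw [legendrePDivX, ih, show 2 * (n + 1) + 1 = 2 * n + 1 + 2 by omega,
      legendreP_add_two (2 * n + 1)]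
    push_cast
    field_simp
    ring

theorem continuous_legendrePDivX (n : ℕ) : Continuous (legendrePDivX n) := by
  induction n with
  | zero => exact continuous_const
  | succ n ih =>
    exact (continuous_const.mul (continuous_legendreP _)).add (continuous_const.mul ih)

theorem integral_legendrePDivX_mul_legendreP_of_lt {n m : ℕ} (h : 2 * n < m) :
    ∫ x in (-1 : ℝ)..1, legendrePDivX n x * legendreP m x = 0 := by
  induction n generalizing m with
  | zero => simpa [legendrePDivX, legendreP] using
      integral_legendreP_mul_legendreP_of_ne (by omega : m ≠ 0)
  | succ n ih =>
    simp only [legendrePDivX]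
    rw [integral_linear_comb_mul (continuous_legendreP _) (continuous_legendrePDivX n)
      (continuous_legendreP m), integral_legendreP_mul_legendreP_of_ne (by omega), ih (by omega)]
    ring

theorem integral_legendrePDivX_sq (n : ℕ) :
    ∫ x in (-1 : ℝ)..1, legendrePDivX n x ^ 2 = 2 := by
  induction n with
  | zero => norm_num [legendrePDivX]
  | succ n ih =>
    simp only [legendrePDivX]
    have horth : ∫ x in (-1 : ℝ)..1, legendreP (2 * n + 2) x * legendrePDivX n x = 0 := by
      simpa only [mul_comm] using
        integral_legendrePDivX_mul_legendreP_of_lt (by omega : 2 * n < 2 * n + 2)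
    rw [integral_linear_comb_sq_of_orthogonal (continuous_legendreP _) (continuous_legendrePDivX n)
      horth, integral_legendreP_sq, ih]
    push_cast
    field_simp
    ring

theorem legendre_odd_filter_integral (n : ℕ) :
    ∫ x in (-1 : ℝ)..1, (legendreP (2 * n + 1) x / x) ^ 2 = 2 := by
  rw [← integral_legendrePDivX_sq n]
  refine intervalIntegral.integral_congr_ae ?_
  filter_upwards [Measure.ae_ne volume 0] with x hx _
  rw [legendrePDivX_eq n hx]
end

section
/- For every natural number n, the integral over [-1,1] of ((P_{2n}(x) - P_{2n}(0))/x)^2 dx equals 2[1 - 2^{-4n} (binom(2n,n))^2], where P_k denotes the k-th Legendre polynomial. -/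
open MeasureTheory Real

/-!
Write `D_m = (P_m - P_m(0)) / X` (`Polynomial.divX`). The recurrence gives
`(m+2) D_{m+2} = (2m+3) P_{m+1} - (m+1) D_m`, so `D_m` is a combination of the `P_k` with `k < m`
and is orthogonal to every `P_j` with `j ≥ m`. Squaring the recurrence and using
`∫ P_{m+1}² = 2/(2m+3)` gives `(m+2)² ∫ D_{m+2}² = 2(2m+3) + (m+1)² ∫ D_m²`; together with
`(m+2) P_{m+2}(0) = -(m+1) P_m(0)` this yields `∫ D_m² = 2 (1 - P_m(0)²)` for every `m`.

Orthogonality of the `P_n` comes from Legendre's equation `((1 - x²) P_n')' = -n(n+1) P_n`: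
the polynomial `(1 - x²)(P_i P_j' - P_j P_i')` vanishes at `±1` and has derivative
`(i(i+1) - j(j+1)) P_i P_j`.
-/

open Polynomial

noncomputable def legendrePoly : ℕ → ℝ[X]
  | 0 => 1
  | 1 => X
  | n + 2 => C (n + 2 : ℝ)⁻¹ *
      (C (2 * n + 3 : ℝ) * X * legendrePoly (n + 1) - C (n + 1 : ℝ) * legendrePoly n)

theorem eval_legendrePoly : ∀ (n : ℕ) (x : ℝ), (legendrePoly n).eval x = legendreP n x
  | 0, _ => by simp [legendrePoly, legendreP]
  | 1, _ => by simp [legendrePoly, legendreP]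
  | n + 2, x => by
    simp [legendrePoly, legendreP, eval_legendrePoly n, eval_legendrePoly (n + 1), div_eq_inv_mul]

theorem C_mul_legendrePoly_succ_succ (n : ℕ) :
    C (n + 2 : ℝ) * legendrePoly (n + 2) =
      C (2 * n + 3 : ℝ) * X * legendrePoly (n + 1) - C (n + 1 : ℝ) * legendrePoly n := by
  rw [legendrePoly, ← mul_assoc, ← C_mul, mul_inv_cancel₀ (by positivity), C_1, one_mul]

theorem derivative_legendrePoly_succ_and_X_mul (n : ℕ) :
    derivative (legendrePoly (n + 1)) =
        X * derivative (legendrePoly n) + C (n + 1 : ℝ) * legendrePoly n ∧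
      X * derivative (legendrePoly (n + 1)) =
        derivative (legendrePoly n) + C (n + 1 : ℝ) * legendrePoly (n + 1) := by
  induction n with
  | zero => simp [legendrePoly]
  | succ n ih =>
    obtain ⟨ih_deriv, ih_X_mul⟩ := ih
    have hrec := C_mul_legendrePoly_succ_succ n
    have hrec_deriv := congrArg derivative hrec
    simp only [derivative_mul, derivative_C, derivative_X, derivative_sub, zero_mul, zero_add,
      mul_one] at hrec_deriv
    have hderiv : derivative (legendrePoly (n + 2)) =
        X * derivative (legendrePoly (n + 1)) + C (n + 2 : ℝ) * legendrePoly (n + 1) := by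
      apply mul_left_cancel₀ (C_ne_zero.mpr (by positivity : (n + 2 : ℝ) ≠ 0))
      simp only [map_add, map_mul, map_natCast, map_ofNat, C_1] at *
      linear_combination hrec_deriv + (n + 1 : ℝ[X]) * ih_X_mul
    refine ⟨by convert hderiv using 4; push_cast; ring, ?_⟩
    simp only [Nat.cast_add, Nat.cast_one, map_add, map_mul, map_natCast, map_ofNat, C_1] at *
    linear_combination X * hderiv + X * ih_X_mul - ih_deriv - hrec

theorem one_sub_X_sq_mul_derivative_legendrePoly_succ (n : ℕ) :
    (1 - X ^ 2) * derivative (legendrePoly (n + 1)) =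
      C (n + 1 : ℝ) * (legendrePoly n - X * legendrePoly (n + 1)) := by
  obtain ⟨hderiv, hX_mul⟩ := derivative_legendrePoly_succ_and_X_mul n
  linear_combination hderiv - X * hX_mul

theorem derivative_one_sub_X_sq_mul_derivative_legendrePoly (n : ℕ) :
    derivative ((1 - X ^ 2) * derivative (legendrePoly n)) =
      -C (n * (n + 1) : ℝ) * legendrePoly n := by
  cases n with
  | zero => simp [legendrePoly]
  | succ n =>
    rw [one_sub_X_sq_mul_derivative_legendrePoly_succ]
    have hX_mul := (derivative_legendrePoly_succ_and_X_mul n).2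
    simp only [derivative_mul, derivative_C, derivative_sub, derivative_X, zero_mul, zero_add,
      one_mul] at *
    simp only [map_add, map_mul, map_natCast, C_1] at *
    push_cast
    linear_combination (-(n + 1 : ℝ[X])) * hX_mul

noncomputable def Polynomial.intervalIntegralₗ (a b : ℝ) : ℝ[X] →ₗ[ℝ] ℝ where
  toFun p := ∫ x in a..b, p.eval x
  map_add' p q := by
    simpa using intervalIntegral.integral_add (p.continuous.intervalIntegrable a b)
      (q.continuous.intervalIntegrable a b)
  map_smul' c p := by simp [intervalIntegral.integral_const_mul]

theorem Polynomial.intervalIntegralₗ_apply (a b : ℝ) (p : ℝ[X]) :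
    intervalIntegralₗ a b p = ∫ x in a..b, p.eval x := rfl

theorem Polynomial.intervalIntegralₗ_C_mul (a b c : ℝ) (p : ℝ[X]) :
    intervalIntegralₗ a b (C c * p) = c * intervalIntegralₗ a b p := by
  rw [C_mul', map_smul, smul_eq_mul]

theorem Polynomial.intervalIntegralₗ_derivative (a b : ℝ) (p : ℝ[X]) :
    intervalIntegralₗ a b (derivative p) = p.eval b - p.eval a :=
  intervalIntegral.integral_eq_sub_of_hasDerivAt (fun x _ ↦ p.hasDerivAt x)
    (p.derivative.continuous.intervalIntegrable a b)

theorem intervalIntegralₗ_legendrePoly_mul_legendrePoly_of_ne {i j : ℕ} (hij : i ≠ j) :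
    intervalIntegralₗ (-1) 1 (legendrePoly i * legendrePoly j) = 0 := by
  set W : ℝ[X] := legendrePoly i * ((1 - X ^ 2) * derivative (legendrePoly j)) -
    legendrePoly j * ((1 - X ^ 2) * derivative (legendrePoly i))
  have hW : derivative W =
      C (i * (i + 1) - j * (j + 1) : ℝ) * (legendrePoly i * legendrePoly j) := by
    simp only [W, derivative_mul (f := legendrePoly _),
      derivative_one_sub_X_sq_mul_derivative_legendrePoly, map_sub]
    ring
  have hW_one : W.eval 1 = 0 := by simp [W]
  have hW_neg_one : W.eval (-1) = 0 := by simp [W]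
  have hij' : (i * (i + 1) - j * (j + 1) : ℝ) ≠ 0 := by
    have : (i - j : ℝ) * (i + j + 1) ≠ 0 :=
      mul_ne_zero (sub_ne_zero.mpr (by exact_mod_cast hij)) (by positivity)
    convert this using 1
    ring
  have h := intervalIntegralₗ_derivative (-1) 1 W
  rw [hW, intervalIntegralₗ_C_mul, hW_one, hW_neg_one, sub_zero] at h
  exact (mul_eq_zero.mp h).resolve_left hij'

-- At `n = 0` the truncated index `n - 1` is harmless, since its coefficient vanishes.
theorem C_mul_X_mul_legendrePoly (n : ℕ) :
    C (2 * n + 1 : ℝ) * (X * legendrePoly n) =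
      C (n + 1 : ℝ) * legendrePoly (n + 1) + C (n : ℝ) * legendrePoly (n - 1) := by
  cases n with
  | zero => simp [legendrePoly]
  | succ n =>
    have h := C_mul_legendrePoly_succ_succ n
    simp only [Nat.add_sub_cancel, Nat.cast_add, Nat.cast_one, map_add, map_mul, map_natCast,
      map_ofNat, C_1] at *
    linear_combination -h

theorem intervalIntegralₗ_legendrePoly_mul_self (n : ℕ) :
    intervalIntegralₗ (-1) 1 (legendrePoly n * legendrePoly n) = 2 / (2 * n + 1) := by
  induction n with
  | zero => simp [legendrePoly, intervalIntegralₗ_apply]; norm_num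
  | succ n ih =>
    have h₁ := congrArg (fun p ↦ intervalIntegralₗ (-1) 1 (p * legendrePoly (n + 1)))
      (C_mul_X_mul_legendrePoly n)
    have h₂ := congrArg (fun p ↦ intervalIntegralₗ (-1) 1 (p * legendrePoly n))
      (C_mul_X_mul_legendrePoly (n + 1))
    simp only [add_mul, mul_assoc, map_add (intervalIntegralₗ (-1) 1), intervalIntegralₗ_C_mul,
      Nat.add_sub_cancel] at h₁ h₂
    rw [mul_comm (legendrePoly (n + 1)) (legendrePoly n)] at h₂
    rw [intervalIntegralₗ_legendrePoly_mul_legendrePoly_of_ne (by omega : n - 1 ≠ n + 1)] at h₁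
    rw [intervalIntegralₗ_legendrePoly_mul_legendrePoly_of_ne (by omega : n + 1 + 1 ≠ n),
      ih] at h₂
    push_cast at h₁ h₂ ⊢
    rw [eq_div_iff (by positivity)]
    apply mul_left_cancel₀ (by positivity : (n + 1 : ℝ) ≠ 0)
    field_simp at h₂
    linear_combination h₂ - (2 * n + 3 : ℝ) * h₁

theorem Polynomial.divX_X {R : Type*} [Semiring R] : divX (X : R[X]) = 1 := by
  simpa using divX_X_pow (R := R) (n := 1)

theorem Polynomial.eval_divX {K : Type*} [Field K] (p : K[X]) {x : K} (hx : x ≠ 0) :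
    (divX p).eval x = (p.eval x - p.eval 0) / x := by
  have h := congrArg (eval x) (X_mul_divX_add p)
  rw [eval_add, eval_mul, eval_X, eval_C, coeff_zero_eq_eval_zero] at h
  rw [eq_div_iff hx]
  linear_combination h

theorem C_mul_divX_legendrePoly_succ_succ (m : ℕ) :
    C (m + 2 : ℝ) * divX (legendrePoly (m + 2)) =
      C (2 * m + 3 : ℝ) * legendrePoly (m + 1) - C (m + 1 : ℝ) * divX (legendrePoly m) := by
  rw [← divX_C_mul, C_mul_legendrePoly_succ_succ]
  ext k
  simp only [coeff_divX, coeff_sub, coeff_C_mul, mul_assoc, coeff_X_mul]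

theorem intervalIntegralₗ_divX_legendrePoly_mul_legendrePoly_of_le :
    ∀ {m j : ℕ}, m ≤ j → intervalIntegralₗ (-1) 1 (divX (legendrePoly m) * legendrePoly j) = 0
  | 0, _, _ => by simp [legendrePoly]
  | 1, j, h => by
    simpa [legendrePoly, divX_X] using
      intervalIntegralₗ_legendrePoly_mul_legendrePoly_of_ne (by omega : 0 ≠ j)
  | m + 2, j, h => by
    have hrec := congrArg (fun p ↦ intervalIntegralₗ (-1) 1 (p * legendrePoly j))
      (C_mul_divX_legendrePoly_succ_succ m)
    simp only [sub_mul, mul_assoc, map_sub, intervalIntegralₗ_C_mul,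
      intervalIntegralₗ_legendrePoly_mul_legendrePoly_of_ne (by omega : m + 1 ≠ j),
      intervalIntegralₗ_divX_legendrePoly_mul_legendrePoly_of_le (by omega : m ≤ j)] at hrec
    simpa [(by positivity : (m + 2 : ℝ) ≠ 0)] using hrec

theorem legendreP_succ_succ_zero (m : ℕ) :
    (m + 2 : ℝ) * legendreP (m + 2) 0 = -(m + 1) * legendreP m 0 := by
  rw [legendreP]
  field_simp
  ring

theorem intervalIntegralₗ_divX_legendrePoly_sq :
    ∀ m : ℕ, intervalIntegralₗ (-1) 1 (divX (legendrePoly m) ^ 2) = 2 * (1 - legendreP m 0 ^ 2)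
  | 0 => by simp [legendrePoly, legendreP]
  | 1 => by simp [legendrePoly, legendreP, divX_X, intervalIntegralₗ_apply]; norm_num
  | m + 2 => by
    have hsq : C ((m + 2) ^ 2 : ℝ) * divX (legendrePoly (m + 2)) ^ 2 =
        C ((2 * m + 3) ^ 2 : ℝ) * (legendrePoly (m + 1) * legendrePoly (m + 1)) -
          C (2 * (2 * m + 3) * (m + 1) : ℝ) * (divX (legendrePoly m) * legendrePoly (m + 1)) +
          C ((m + 1) ^ 2 : ℝ) * divX (legendrePoly m) ^ 2 := by
      have h := C_mul_divX_legendrePoly_succ_succ m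
      simp only [map_pow, map_mul, map_ofNat]
      linear_combination (C (m + 2 : ℝ) * divX (legendrePoly (m + 2)) +
        C (2 * m + 3 : ℝ) * legendrePoly (m + 1) - C (m + 1 : ℝ) * divX (legendrePoly m)) * h
    have hnorm : (2 * m + 3 : ℝ) ^ 2 *
        intervalIntegralₗ (-1) 1 (legendrePoly (m + 1) * legendrePoly (m + 1)) =
          2 * (2 * m + 3) := by
      rw [intervalIntegralₗ_legendrePoly_mul_self]
      push_cast
      field_simp
      ring
    have h := congrArg (intervalIntegralₗ (-1) 1) hsq
    simp only [map_add, map_sub, intervalIntegralₗ_C_mul, hnorm,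
      intervalIntegralₗ_divX_legendrePoly_mul_legendrePoly_of_le (by omega : m ≤ m + 1),
      intervalIntegralₗ_divX_legendrePoly_sq m] at h
    have h0 := legendreP_succ_succ_zero m
    apply mul_left_cancel₀ (pow_ne_zero 2 (by positivity : (m + 2 : ℝ) ≠ 0))
    linear_combination h + 2 * ((m + 2) * legendreP (m + 2) 0 - (m + 1) * legendreP m 0) * h0

theorem legendreP_two_mul_zero (n : ℕ) :
    legendreP (2 * n) 0 = (-1) ^ n * (2 * n).choose n / 2 ^ (2 * n) := by
  induction n with
  | zero => simp [legendreP]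
  | succ n ih =>
    have h := legendreP_succ_succ_zero (2 * n)
    have hc : ((n + 1 : ℕ) : ℝ) * (2 * (n + 1)).choose (n + 1) =
        2 * (2 * n + 1) * (2 * n).choose n := by
      exact_mod_cast Nat.succ_mul_centralBinom_succ n
    rw [show 2 * (n + 1) = 2 * n + 2 by ring] at hc ⊢
    rw [ih] at h
    rw [eq_div_iff (by positivity)]
    apply mul_left_cancel₀ (by positivity : (2 * n + 2 : ℝ) ≠ 0)
    push_cast at h hc
    field_simp at h
    linear_combination 4 * h + 2 * (-1 : ℝ) ^ n * hc

theorem legendre_even_filter_integral (n : ℕ) :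
    ∫ x in (-1 : ℝ)..1, ((legendreP (2 * n) x - legendreP (2 * n) 0) / x) ^ 2
      = 2 * (1 - ((2 * n).choose n : ℝ) ^ 2 / 2 ^ (4 * n)) := by
  have hae : ∀ᵐ x : ℝ, x ∈ Set.uIoc (-1) 1 →
      ((legendreP (2 * n) x - legendreP (2 * n) 0) / x) ^ 2 =
        (divX (legendrePoly (2 * n)) ^ 2).eval x := by
    filter_upwards [compl_mem_ae_iff.mpr (measure_singleton (0 : ℝ))] with x hx _
    rw [eval_pow, eval_divX _ hx, eval_legendrePoly, eval_legendrePoly]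
  rw [intervalIntegral.integral_congr_ae hae, ← intervalIntegralₗ_apply,
    intervalIntegralₗ_divX_legendrePoly_sq, legendreP_two_mul_zero, div_pow, mul_pow,
    ← pow_mul, pow_mul', neg_one_sq, one_pow, one_mul, ← pow_mul]
  ring_nf
end

section
/- For every natural number n ≥ 1, the integral over [0,∞) of ((L_n(x) - L_n(0))/x)^2 e^{-x} dx equals 2n - H_n, where L_k denotes the k-th Laguerre polynomial and H_n = 1 + 1/2 + ... + 1/n is the n-th harmonic number. -/
open MeasureTheory Real Finset

/-- The Laguerre polynomials `L_n(x) = ∑_{k=0}^n ((-1)^k / k!) C(n,k) x^k`. -/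
noncomputable def laguerreL (n : ℕ) (x : ℝ) : ℝ :=
  ∑ k ∈ Finset.range (n + 1), (-1 : ℝ) ^ k / (k.factorial : ℝ) * (n.choose k : ℝ) * x ^ k

/-- The harmonic number `H_n = 1 + 1/2 + ⋯ + 1/n`. -/
noncomputable def harmonicNum (n : ℕ) : ℝ := ∑ j ∈ Finset.Icc 1 n, (1 : ℝ) / j

/-! Write `P = (L_n - L_n(0)) / X` and `Q = (P - P(0)) / X`. Then `P² = P(0) P + (L_n - 1) Q`,
and integrating against `e^{-x}` (which sends `x^i` to `i!`), the orthogonality of `L_n` to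
polynomials of degree `< n` kills `∫ L_n Q e^{-x}`, leaving `-n ∫ P e^{-x} - ∫ Q e^{-x}`.
Both integrals are alternating binomial sums, `∑ (-1)^k C(n,k) / k = -H_n` and
`∑ (-1)^k C(n,k) / (k (k-1)) = (n+1) H_n - 2n`, which follow from Pascal's rule by induction
on `n`. Orthogonality itself is the vanishing of the `n`-th finite difference of a polynomial of
degree `< n`. -/

open Polynomial

lemma harmonicNum_succ (n : ℕ) : harmonicNum (n + 1) = harmonicNum n + 1 / (n + 1) := by
  rw [harmonicNum, harmonicNum, sum_Icc_succ_top (by omega)]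
  push_cast
  ring

section BinomialTransform

variable (R : Type*) [CommRing R]

def binomialTransform (n : ℕ) : (ℕ → R) →ₗ[R] R where
  toFun f := ∑ k ∈ range (n + 1), (-1) ^ k * n.choose k * f k
  map_add' f g := by simp only [Pi.add_apply, mul_add, sum_add_distrib]
  map_smul' c f := by
    simp only [Pi.smul_apply, smul_eq_mul, RingHom.id_apply, mul_sum]
    exact sum_congr rfl fun _ _ => by ring

variable {R}

lemma binomialTransform_apply (n : ℕ) (f : ℕ → R) :
    binomialTransform R n f = ∑ k ∈ range (n + 1), (-1) ^ k * n.choose k * f k := rfl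

lemma binomialTransform_succ (n : ℕ) (f : ℕ → R) :
    binomialTransform R (n + 1) f =
      binomialTransform R n f - binomialTransform R n (fun k => f (k + 1)) := by
  have hpascal :
      ∑ k ∈ range (n + 1), (-1) ^ (k + 1) * ((n + 1).choose (k + 1) : R) * f (k + 1) =
      ∑ k ∈ range (n + 1), (-1) ^ (k + 1) * (n.choose (k + 1) : R) * f (k + 1) -
        binomialTransform R n (fun k => f (k + 1)) := by
    simp only [binomialTransform_apply, ← sum_sub_distrib, Nat.choose_succ_succ', Nat.cast_add]
    exact sum_congr rfl fun _ _ => by ring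
  rw [binomialTransform_apply, binomialTransform_apply, sum_range_succ' _ (n + 1), hpascal,
    sum_range_succ _ n, sum_range_succ' _ n, Nat.choose_succ_self]
  simp only [Nat.cast_zero, mul_zero, zero_mul, add_zero, pow_zero, Nat.choose_zero_right,
    Nat.cast_one, one_mul]
  ring

lemma binomialTransform_const (n : ℕ) (c : R) :
    binomialTransform R (n + 1) (fun _ => c) = 0 := by
  rw [binomialTransform_succ, sub_self]

lemma binomialTransform_eval_eq_zero {p : R[X]} {n : ℕ} (hp : p.natDegree < n) :
    binomialTransform R n (fun k => p.eval (k : R)) = 0 := calc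
  _ = (-1) ^ n * (fwdDiff 1)^[n] p.eval 0 := by
    rw [binomialTransform_apply, fwdDiff_iter_eq_sum_shift, mul_sum]
    refine sum_congr rfl fun k hk => ?_
    obtain ⟨j, rfl⟩ := Nat.exists_eq_add_of_le (Nat.lt_succ_iff.mp (mem_range.mp hk))
    have hsq : ((-1 : R) ^ j) ^ 2 = 1 := by rw [← pow_mul, pow_mul', neg_one_sq, one_pow]
    simp only [zsmul_eq_mul, nsmul_eq_mul, mul_one, zero_add, Nat.add_sub_cancel_left]
    push_cast
    linear_combination -(-1) ^ k * ((k + j).choose k : R) * p.eval (k : R) * hsq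
  _ = 0 := by rw [Polynomial.fwdDiff_iter_eq_zero_of_degree_lt hp, Pi.zero_apply, mul_zero]

lemma binomialTransform_ascFactorial_eq_zero [IsDomain R] {m n : ℕ} (h : m < n) :
    binomialTransform R n (fun k => ((k + 1).ascFactorial m : R)) = 0 := by
  have hdeg : ((ascPochhammer R m).comp (X + C 1)).natDegree < n := by
    rwa [natDegree_comp, ascPochhammer_natDegree, natDegree_X_add_C, mul_one]
  convert binomialTransform_eval_eq_zero hdeg using 3 with k
  simp [Nat.cast_ascFactorial]

end BinomialTransform

lemma binomialTransform_one_div_succ (n : ℕ) :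
    binomialTransform ℝ n (fun k => 1 / (k + 1)) = 1 / (n + 1) := by
  have habsorb : ∀ k, (-1) ^ k * (n.choose k : ℝ) * (1 / (k + 1)) =
      -((-1) ^ (k + 1) * ((n + 1).choose (k + 1) : ℝ) * 1) / (n + 1) := by
    intro k
    have h : ((n + 1 : ℕ) : ℝ) * n.choose k = (n + 1).choose (k + 1) * (k + 1 : ℕ) := by
      exact_mod_cast Nat.add_one_mul_choose_eq n k
    push_cast at h
    field_simp
    linear_combination (-1) ^ k * h
  have hzero := binomialTransform_const n (1 : ℝ)
  rw [binomialTransform_apply, sum_range_succ'] at hzero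
  rw [binomialTransform_apply, sum_congr rfl fun k _ => habsorb k, ← sum_div, sum_neg_distrib]
  simp only [pow_zero, Nat.choose_zero_right, Nat.cast_one, mul_one] at hzero ⊢
  rw [eq_neg_of_add_eq_zero_left hzero]
  ring

-- Here and below the `k = 0` (and `k = 1`) terms vanish through the junk value `1 / 0 = 0`.
lemma binomialTransform_one_div (n : ℕ) :
    binomialTransform ℝ n (fun k => 1 / k) = -harmonicNum n := by
  induction n with
  | zero => simp [binomialTransform_apply, harmonicNum]
  | succ n ih =>
    rw [binomialTransform_succ, ih, harmonicNum_succ]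
    push_cast
    rw [binomialTransform_one_div_succ]
    ring

lemma binomialTransform_one_div_mul_sub_one (n : ℕ) :
    binomialTransform ℝ n (fun k => 1 / (k * (k - 1))) = (n + 1) * harmonicNum n - 2 * n := by
  induction n with
  | zero => simp [binomialTransform_apply, harmonicNum]
  | succ n ih =>
    have hsplit : (fun k : ℕ => 1 / (((k + 1 : ℕ) : ℝ) * ((k + 1 : ℕ) - 1))) =
        (fun k : ℕ => 1 / (k : ℝ)) - (fun k : ℕ => 1 / ((k : ℝ) + 1)) +
          fun k => if k = 0 then 1 else 0 := by
      ext k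
      rcases Nat.eq_zero_or_pos k with rfl | hk
      · simp
      · have hk' : (k : ℝ) ≠ 0 := by positivity
        simp only [Pi.add_apply, Pi.sub_apply, if_neg hk.ne', Nat.cast_add_one,
          add_sub_cancel_right]
        field_simp
        ring
    have hdelta : binomialTransform ℝ n (fun k => if k = 0 then 1 else 0) = 1 := by
      simp [binomialTransform_apply]
    rw [binomialTransform_succ, ih, hsplit, map_add, map_sub, hdelta, binomialTransform_one_div,
      binomialTransform_one_div_succ, harmonicNum_succ]
    push_cast
    field_simp
    ring

lemma divX_sq {R : Type*} [CommRing R] (p : R[X]) :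
    p.divX ^ 2 = C (p.divX.coeff 0) * p.divX + (p - C (p.coeff 0)) * p.divX.divX := by
  linear_combination p.divX.divX * divX_mul_X_add p - p.divX * divX_mul_X_add p.divX

noncomputable def gammaMoment : ℝ[X] →ₗ[ℝ] ℝ :=
  lsum fun i => (i.factorial : ℝ) • LinearMap.id

lemma gammaMoment_monomial (i : ℕ) (a : ℝ) : gammaMoment (monomial i a) = a * i.factorial := by
  simp [gammaMoment, lsum_apply, sum_monomial_index, mul_comm]

lemma gammaMoment_eq_sum_range {p : ℝ[X]} {N : ℕ} (hp : p.degree < N) :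
    gammaMoment p = ∑ i ∈ range N, p.coeff i * i.factorial := by
  rw [gammaMoment, lsum_apply, Polynomial.sum_def]
  refine sum_subset (fun i hi => ?_) (fun i _ hi => ?_) |>.trans (sum_congr rfl fun i _ => ?_)
  · have hi : (i : WithBot ℕ) < N := (le_degree_of_ne_zero (mem_support_iff.mp hi)).trans_lt hp
    exact mem_range.mpr (mod_cast hi)
  · simp [notMem_support_iff.mp hi]
  · simp [mul_comm]

lemma integrableOn_pow_mul_exp_neg (m : ℕ) :
    IntegrableOn (fun x : ℝ => x ^ m * exp (-x)) (Set.Ioi 0) := by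
  convert Real.GammaIntegral_convergent (show (0 : ℝ) < m + 1 by positivity) using 2 with x
  simp [rpow_natCast, mul_comm]

lemma integral_pow_mul_exp_neg (m : ℕ) :
    ∫ x in Set.Ioi (0 : ℝ), x ^ m * exp (-x) = m.factorial := by
  rw [← Real.Gamma_nat_eq_factorial, Real.Gamma_eq_integral (by positivity)]
  simp [rpow_natCast, mul_comm]

lemma integral_eval_mul_exp_neg (p : ℝ[X]) :
    ∫ x in Set.Ioi (0 : ℝ), p.eval x * exp (-x) = gammaMoment p := by
  have hdeg : p.degree < ↑(p.natDegree + 1) :=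
    degree_le_natDegree.trans_lt (by exact_mod_cast Nat.lt_succ_self _)
  simp_rw [gammaMoment_eq_sum_range hdeg, eval_eq_sum_range, sum_mul, mul_assoc]
  rw [integral_finsetSum _ fun i _ => (integrableOn_pow_mul_exp_neg i).const_mul _]
  simp_rw [integral_const_mul, integral_pow_mul_exp_neg]

noncomputable def laguerrePoly (n : ℕ) : ℝ[X] :=
  ∑ k ∈ range (n + 1), monomial k ((-1 : ℝ) ^ k / (k.factorial : ℝ) * (n.choose k : ℝ))

lemma eval_laguerrePoly (n : ℕ) (x : ℝ) : (laguerrePoly n).eval x = laguerreL n x := by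
  simp [laguerrePoly, laguerreL, eval_finsetSum]

lemma coeff_laguerrePoly (n k : ℕ) :
    (laguerrePoly n).coeff k = (-1) ^ k / (k.factorial : ℝ) * (n.choose k : ℝ) := by
  simp only [laguerrePoly, finsetSum_coeff, coeff_monomial, sum_ite_eq', mem_range]
  split_ifs with hk
  · rfl
  · rw [Nat.choose_eq_zero_of_lt (by omega), Nat.cast_zero, mul_zero]

lemma coeff_laguerrePoly_zero (n : ℕ) : (laguerrePoly n).coeff 0 = 1 := by
  simp [coeff_laguerrePoly]

lemma coeff_laguerrePoly_one (n : ℕ) : (laguerrePoly n).coeff 1 = -n := by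
  simp [coeff_laguerrePoly]

lemma coeff_laguerrePoly_of_lt {n k : ℕ} (h : n < k) : (laguerrePoly n).coeff k = 0 := by
  rw [coeff_laguerrePoly, Nat.choose_eq_zero_of_lt h, Nat.cast_zero, mul_zero]

lemma degree_divX_laguerrePoly_lt (n : ℕ) : (laguerrePoly n).divX.degree < n :=
  (degree_lt_iff_coeff_zero _ _).mpr fun m hm => by
    rw [coeff_divX, coeff_laguerrePoly_of_lt (by omega)]

lemma degree_divX_divX_laguerrePoly_lt (n : ℕ) : (laguerrePoly n).divX.divX.degree < n :=
  (degree_lt_iff_coeff_zero _ _).mpr fun m hm => by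
    rw [coeff_divX, coeff_divX, coeff_laguerrePoly_of_lt (by omega)]

lemma gammaMoment_laguerrePoly_mul_X_pow {m n : ℕ} (h : m < n) :
    gammaMoment (laguerrePoly n * X ^ m) = 0 := by
  rw [← binomialTransform_ascFactorial_eq_zero h, laguerrePoly, sum_mul, map_sum,
    binomialTransform_apply]
  refine sum_congr rfl fun k _ => ?_
  rw [monomial_mul_X_pow, gammaMoment_monomial, ← Nat.factorial_mul_ascFactorial]
  push_cast
  field_simp

lemma gammaMoment_laguerrePoly_mul_eq_zero {n : ℕ} {q : ℝ[X]} (hq : q.degree < n) :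
    gammaMoment (laguerrePoly n * q) = 0 := by
  rw [q.as_sum_support_C_mul_X_pow, mul_sum, map_sum]
  refine sum_eq_zero fun i hi => ?_
  have hi : i < n := by exact_mod_cast (le_degree_of_ne_zero (mem_support_iff.mp hi)).trans_lt hq
  rw [mul_left_comm, C_mul', map_smul, gammaMoment_laguerrePoly_mul_X_pow hi, smul_zero]

lemma gammaMoment_divX_laguerrePoly (n : ℕ) :
    gammaMoment (laguerrePoly n).divX = -harmonicNum n := by
  rw [gammaMoment_eq_sum_range (degree_divX_laguerrePoly_lt n), ← binomialTransform_one_div,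
    binomialTransform_apply, sum_range_succ']
  simp only [Nat.cast_zero, div_zero, mul_zero, add_zero]
  refine sum_congr rfl fun i _ => ?_
  rw [coeff_divX, coeff_laguerrePoly, Nat.factorial_succ]
  push_cast
  field_simp

lemma gammaMoment_divX_divX_laguerrePoly (n : ℕ) :
    gammaMoment (laguerrePoly n).divX.divX = (n + 1) * harmonicNum n - 2 * n := by
  rw [gammaMoment_eq_sum_range (degree_divX_divX_laguerrePoly_lt n),
    ← binomialTransform_one_div_mul_sub_one, binomialTransform_apply]
  trans ∑ k ∈ range (n + 2), (-1) ^ k * (n.choose k : ℝ) * (1 / (k * (k - 1)))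
  · rw [sum_range_succ' _ (n + 1), sum_range_succ']
    simp only [zero_add, Nat.cast_zero, Nat.cast_one, zero_mul, sub_self, mul_zero, div_zero,
      add_zero]
    refine sum_congr rfl fun i _ => ?_
    rw [coeff_divX, coeff_divX, coeff_laguerrePoly, Nat.factorial_succ, Nat.factorial_succ]
    push_cast
    field_simp
    ring
  · rw [sum_range_succ _ (n + 1), Nat.choose_succ_self, Nat.cast_zero, mul_zero, zero_mul,
      add_zero]

theorem laguerre_filter_integral_general (n : ℕ) :
    ∫ x in Set.Ioi (0 : ℝ), ((laguerreL n x - laguerreL n 0) / x) ^ 2 * Real.exp (-x)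
      = 2 * n - harmonicNum n := by
  have hintegrand : Set.EqOn (fun x => ((laguerreL n x - laguerreL n 0) / x) ^ 2 * exp (-x))
      (fun x => ((laguerrePoly n).divX ^ 2).eval x * exp (-x)) (Set.Ioi 0) := by
    intro x hx
    have hsub : laguerreL n x - laguerreL n 0 = (laguerrePoly n).divX.eval x * x := by
      rw [← eval_laguerrePoly, ← eval_laguerrePoly, ← coeff_zero_eq_eval_zero]
      nth_rw 1 [← divX_mul_X_add (laguerrePoly n)]
      simp
    simp only [hsub, eval_pow, mul_div_cancel_right₀ _ (Set.mem_Ioi.mp hx).ne']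
  rw [setIntegral_congr_fun measurableSet_Ioi hintegrand, integral_eval_mul_exp_neg, divX_sq,
    sub_mul, C_mul', C_mul', map_add, map_sub, map_smul, map_smul,
    gammaMoment_laguerrePoly_mul_eq_zero (degree_divX_divX_laguerrePoly_lt n),
    gammaMoment_divX_laguerrePoly, gammaMoment_divX_divX_laguerrePoly, coeff_divX, zero_add,
    coeff_laguerrePoly_one, coeff_laguerrePoly_zero, smul_eq_mul, smul_eq_mul]
  ring

theorem laguerre_filter_integral (n : ℕ) (hn : 1 ≤ n) :
    ∫ x in Set.Ioi (0 : ℝ), ((laguerreL n x - laguerreL n 0) / x) ^ 2 * Real.exp (-x)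
      = 2 * n - harmonicNum n :=
  laguerre_filter_integral_general n
end

section
/- For natural numbers n and k with 2 ≤ k ≤ n, B_{n,k} = -1/(k-1), where B_{n,k} = ∑_{j=1}^{n} ((-1)^j/j) · binom(n,j) · binom(k+j-2, k-1). -/
/-!
For `k = m + 2`, absorption `C(j+m, m+1) / j = C(j+m, m) / (m+1)` gives
`B_{n,k} = (m+1)⁻¹ ∑_{j=1}^n (-1)^j C(n,j) C(j+m, m)`. Up to sign, the full sum over `0 ≤ j ≤ n`
is the `n`-th forward difference of `x ↦ C(x, m)` at `m`, which vanishes because `m < n`;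
so the sum from `j = 1` is minus the `j = 0` term, namely `-1`.
-/

open Finset

/-- `B_{n,k} = ∑_{j=1}^n ((-1)^j / j) C(n,j) C(k+j-2, k-1)`. -/
noncomputable def Bnk (n k : ℕ) : ℝ :=
  ∑ j ∈ Finset.Icc 1 n, (-1 : ℝ) ^ j / (j : ℝ) * (n.choose j : ℝ) * ((k + j - 2).choose (k - 1) : ℝ)

theorem fwdDiff_iter_choose_eq_zero_of_lt {m n : ℕ} (h : m < n) :
    (fwdDiff 1)^[n] (fun x ↦ x.choose m : ℕ → ℤ) = 0 := by
  obtain ⟨d, rfl⟩ := Nat.exists_eq_add_of_lt h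
  have hm : (fwdDiff 1)^[m] (fun x ↦ x.choose m : ℕ → ℤ) = fun _ ↦ 1 := by
    simpa using fwdDiff_iter_choose 0 m
  rw [show m + d + 1 = d + 1 + m by ring, Function.iterate_add_apply, hm]
  simp only [Function.iterate_succ_apply, fwdDiff_const]
  exact Function.iterate_fixed (fwdDiff_const 1 0) d

theorem Int.alternating_sum_range_choose_mul_choose_add {m n : ℕ} (h : m < n) :
    ∑ j ∈ Finset.range (n + 1), (-1 : ℤ) ^ j * n.choose j * (j + m).choose m = 0 := by
  have hΔ := fwdDiff_iter_comp_add 1 (fun x ↦ x.choose m : ℕ → ℤ) m n 0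
  rw [fwdDiff_iter_choose_eq_zero_of_lt h, fwdDiff_iter_eq_sum_shift] at hΔ
  -- `fwdDiff_iter_eq_sum_shift` carries the signs `(-1)^(n-j) = (-1)^n (-1)^j`.
  rw [← mul_right_inj' (pow_ne_zero n (neg_ne_zero.mpr one_ne_zero)), mul_sum, mul_zero]
  refine Eq.trans ?_ (hΔ.trans (by simp))
  refine sum_congr rfl fun j hj ↦ ?_
  obtain ⟨i, rfl⟩ := Nat.exists_eq_add_of_le (Nat.lt_succ_iff.mp (mem_range.mp hj))
  have hsq : ((-1 : ℤ) ^ j) ^ 2 = 1 := by rw [← pow_mul, pow_mul', neg_one_sq, one_pow]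
  simp only [Nat.add_sub_cancel_left, zero_add, smul_eq_mul, mul_one]
  linear_combination (-1 : ℤ) ^ i * (j + i).choose j * (j + m).choose m * hsq

theorem Int.alternating_sum_Icc_choose_mul_choose_add {m n : ℕ} (h : m < n) :
    ∑ j ∈ Icc 1 n, (-1 : ℤ) ^ j * n.choose j * (j + m).choose m = -1 := by
  have h0 := Int.alternating_sum_range_choose_mul_choose_add h
  rw [Nat.range_succ_eq_Icc_zero, ← insert_Icc_add_one_left_eq_Icc n.zero_le,
    sum_insert (by simp)] at h0
  simp only [pow_zero, Nat.choose_zero_right, zero_add, Nat.choose_self, Nat.cast_one,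
    one_mul] at h0
  linear_combination h0

theorem cast_choose_add_succ_div {K : Type*} [Field K] [CharZero K] (m : ℕ) {j : ℕ} (hj : j ≠ 0) :
    ((j + m).choose (m + 1) : K) / j = (j + m).choose m / (m + 1) := by
  have h := Nat.choose_succ_right_eq (j + m) m
  rw [Nat.add_sub_cancel] at h
  rw [div_eq_div_iff (Nat.cast_ne_zero.mpr hj) m.cast_add_one_ne_zero]
  exact_mod_cast h

theorem Bnk_eq (n k : ℕ) (hk : 2 ≤ k) (hkn : k ≤ n) : Bnk n k = -1 / ((k : ℝ) - 1) := by
  obtain ⟨m, rfl⟩ := Nat.exists_eq_add_of_le' hk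
  have hsum : ∑ j ∈ Icc 1 n, (-1 : ℝ) ^ j * n.choose j * (j + m).choose m = -1 := by
    exact_mod_cast Int.alternating_sum_Icc_choose_mul_choose_add (by omega : m < n)
  calc Bnk n (m + 2)
      = ∑ j ∈ Icc 1 n, (-1 : ℝ) ^ j * n.choose j * (j + m).choose m / (m + 1) := by
        refine sum_congr rfl fun j hj ↦ ?_
        have hj0 : j ≠ 0 := Nat.one_le_iff_ne_zero.mp (mem_Icc.mp hj).1
        rw [show m + 2 + j - 2 = j + m by omega, show m + 2 - 1 = m + 1 by omega]
        linear_combination (-1 : ℝ) ^ j * n.choose j * cast_choose_add_succ_div (K := ℝ) m hj0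
    _ = -1 / (((m + 2 : ℕ) : ℝ) - 1) := by
        rw [← sum_div, hsum]
        push_cast
        ring
end

section
/- For every natural number n ≥ 1, the identity ∑_{k=1}^{n} ((2k-1-n) / (k^2 (2k-1))) · binom(2n-1, 2k-2) / binom(n,k)^2 = 0 holds. -/
open Finset

theorem wz_identity (n : ℕ) (hn : 1 ≤ n) :
    ∑ k ∈ Finset.Icc 1 n,
      (2 * (k : ℝ) - 1 - (n : ℝ)) / ((k : ℝ) ^ 2 * (2 * (k : ℝ) - 1))
        * ((2 * n - 1).choose (2 * k - 2) : ℝ) / ((n.choose k : ℝ)) ^ 2 = 0 := by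
  refine Finset.sum_involution (fun k _ => n + 1 - k) ?h1 ?h3 ?hmem ?h4
  · intro k hk
    simp only [mem_Icc] at hk
    obtain ⟨m, rfl⟩ : ∃ m, k = m + 1 := ⟨k - 1, by omega⟩
    obtain ⟨p, rfl⟩ : ∃ p, n = m + 1 + p := ⟨n - (m + 1), by omega⟩
    have e1 : m + 1 + p + 1 - (m + 1) = p + 1 := by omega
    have e2 : 2 * (m + 1 + p) - 1 = 2 * m + 2 * p + 1 := by omega
    have e3 : 2 * (m + 1) - 2 = 2 * m := by omega
    have e4 : 2 * (p + 1) - 2 = 2 * p := by omega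
    beta_reduce
    rw [e1, e2, e3, e4]
    have s1 : (2 * m + 2 * p + 1).choose (2 * p) = (2 * m + 2 * p + 1).choose (2 * m + 1) := by
      rw [← Nat.choose_symm (by omega : 2 * m + 1 ≤ 2 * m + 2 * p + 1)]
      congr 1; omega
    have s2 : (m + 1 + p).choose (p + 1) = (m + 1 + p).choose m := by
      rw [← Nat.choose_symm (by omega : m ≤ m + 1 + p)]
      congr 1; omega
    rw [s1, s2]
    have h1 := Nat.choose_succ_right_eq (2 * m + 2 * p + 1) (2 * m)
    have h2 := Nat.choose_succ_right_eq (m + 1 + p) m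
    have h1' : ((2 * m + 2 * p + 1).choose (2 * m + 1) : ℝ) * (2 * m + 1) =
        ((2 * m + 2 * p + 1).choose (2 * m) : ℝ) * (2 * p + 1) := by
      exact_mod_cast congrArg (Nat.cast : ℕ → ℝ) (by rw [h1]; congr 1; omega)
    have h2' : ((m + 1 + p).choose (m + 1) : ℝ) * (m + 1) =
        ((m + 1 + p).choose m : ℝ) * (p + 1) := by
      exact_mod_cast congrArg (Nat.cast : ℕ → ℝ) (by rw [h2]; congr 1; omega)
    have hc : (0:ℝ) < ((m + 1 + p).choose (m + 1) : ℝ) := by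
      exact_mod_cast Nat.choose_pos (by omega)
    have hd : (0:ℝ) < ((m + 1 + p).choose m : ℝ) := by
      exact_mod_cast Nat.choose_pos (by omega)
    set a := ((2 * m + 2 * p + 1).choose (2 * m) : ℝ)
    set b := ((2 * m + 2 * p + 1).choose (2 * m + 1) : ℝ)
    set c := ((m + 1 + p).choose (m + 1) : ℝ)
    set d := ((m + 1 + p).choose m : ℝ)
    push_cast
    have hm : ((m:ℝ) + 1) ≠ 0 := by positivity
    have hp : ((p:ℝ) + 1) ≠ 0 := by positivity
    have hA : (2*((m:ℝ)+1)-1) ≠ 0 := by nlinarith [Nat.cast_nonneg (α := ℝ) m]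
    have hB : (2*((p:ℝ)+1)-1) ≠ 0 := by nlinarith [Nat.cast_nonneg (α := ℝ) p]
    field_simp [hc.ne', hd.ne', hm, hp, hA, hB]
    linear_combination (-((m:ℝ)-(p:ℝ))*((m:ℝ)+1)^2*c^2) * h1' +
      (-((m:ℝ)-(p:ℝ))*a*(2*(p:ℝ)+1)*(c*((m:ℝ)+1)+d*((p:ℝ)+1))) * h2' 
  · intro k hk hf
    simp only [mem_Icc] at hk
    beta_reduce
    intro hgk
    apply hf
    have hk2 : n + 1 = 2 * k := by omega
    have : 2 * (k:ℝ) - 1 - (n:ℝ) = 0 := by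
      have : (n:ℝ) + 1 = 2 * k := by exact_mod_cast hk2
      linarith
    rw [this, zero_div, zero_mul, zero_div]
  · intro k hk
    simp only [mem_Icc] at hk ⊢
    omega
  · intro k hk
    simp only [mem_Icc] at hk
    beta_reduce
    omega
end
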